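/- arXiv:0812.3044 — 3 statements merged into one kernel-verified Lean document; each statement's English description precedes it below -/
import Mathlib

section
/- Let n ≥ 1 and let D be the dihedral group of order 4n with presentation ⟨a, b | a^{2n} = 1, b² = 1, bab = a^{-1}⟩. In the complex group algebra ℂ[D], define f_k = a^k − (1/2)(a^k − a^{-k})(1 + a^n) for each integer k. Then f_k · f_1 = f_{k+1} for all k ∈ ℤ; in particular f_1^{2n} = 1 and f_{-1} is the inverse of f_1. -/
/-!
With `s = a ^ n` the central involution, `e = (1 + s) / 2` is an idempotent commuting with `a`,
and `f k = a ^ k * (1 - e) + a ^ (-k) * e`. As `e` and `1 - e` are orthogonal idempotents, `f` is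
`k ↦ a ^ k` on the summand cut out by `1 - e` and `k ↦ a ^ (-k)` on the one cut out by `e`; both
are homomorphisms from `ℤ`, hence so is `f`.
-/

open MonoidAlgebra DihedralGroup

section TwistedZPow

variable {R : Type*} [Ring R]

def twistedZPow (u : Rˣ) (e : R) (k : ℤ) : R :=
  ↑(u ^ k) * (1 - e) + ↑(u ^ (-k)) * e

variable {u : Rˣ} {e : R}

theorem twistedZPow_mul_twistedZPow (he : IsIdempotentElem e) (hu : Commute e u) (k j : ℤ) :
    twistedZPow u e k * twistedZPow u e j = twistedZPow u e (k + j) := by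
  have hc : ∀ m : ℤ, Commute e ↑(u ^ m) := fun m => hu.units_zpow_right m
  have hc' : ∀ m : ℤ, Commute (1 - e) ↑(u ^ m) := fun m => (Commute.one_left _).sub_left (hc m)
  have horth : e * (1 - e) = 0 := by rw [mul_sub, mul_one, he.eq, sub_self]
  have horth' : (1 - e) * e = 0 := by rw [sub_mul, one_mul, he.eq, sub_self]
  simp only [twistedZPow, add_mul, mul_add, (hc' _).mul_mul_mul_comm, (hc _).mul_mul_mul_comm,
    he.one_sub.eq, he.eq, horth, horth', mul_zero, add_zero, zero_add, ← Units.val_mul,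
    ← zpow_add, neg_add]

theorem twistedZPow_eq_one_of_zpow_eq_one {k : ℤ} (hk : u ^ k = 1) : twistedZPow u e k = 1 := by
  simp [twistedZPow, hk]

theorem twistedZPow_one_pow (he : IsIdempotentElem e) (hu : Commute e u) (m : ℕ) :
    twistedZPow u e 1 ^ m = twistedZPow u e m := by
  induction m with
  | zero => rw [pow_zero, Nat.cast_zero, twistedZPow_eq_one_of_zpow_eq_one (zpow_zero u)]
  | succ m ih => rw [pow_succ, ih, twistedZPow_mul_twistedZPow he hu]; push_cast; rfl

end TwistedZPow

theorem isIdempotentElem_half_smul_one_add {𝕜 A : Type*} [Field 𝕜] [NeZero (2 : 𝕜)] [Ring A]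
    [Algebra 𝕜 A] {s : A} (hs : s * s = 1) : IsIdempotentElem ((1 / 2 : 𝕜) • (1 + s)) := by
  have h : (1 + s) * (1 + s) = (2 : 𝕜) • (1 + s) := by
    rw [add_mul, mul_add, mul_add, hs, two_smul]; noncomm_ring
  rw [IsIdempotentElem, smul_mul_smul_comm, h, smul_smul]
  congr 1
  field_simp

theorem stmt0_general (n : ℕ)
    (f : ℤ → MonoidAlgebra ℂ (DihedralGroup (2 * n)))
    (hf : ∀ k : ℤ, f k =
      of ℂ (DihedralGroup (2 * n)) ((r 1 : DihedralGroup (2 * n)) ^ k)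
        - (1 / 2 : ℂ) •
          ((of ℂ (DihedralGroup (2 * n)) ((r 1 : DihedralGroup (2 * n)) ^ k)
              - of ℂ (DihedralGroup (2 * n)) ((r 1 : DihedralGroup (2 * n)) ^ (-k)))
            * (1 + of ℂ (DihedralGroup (2 * n)) ((r 1 : DihedralGroup (2 * n)) ^ (n : ℤ))))) :
    (∀ k : ℤ, f k * f 1 = f (k + 1)) ∧ f 1 ^ (2 * n) = 1 ∧
      f (-1) * f 1 = 1 ∧ f 1 * f (-1) = 1 := by
  have ha : (r 1 : DihedralGroup (2 * n)) ^ (2 * n) = 1 := r_one_pow_n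
  set ι := of ℂ (DihedralGroup (2 * n))
  set u := ι.toHomUnits (r 1)
  set e : MonoidAlgebra ℂ (DihedralGroup (2 * n)) := (1 / 2 : ℂ) • (1 + ι (r 1 ^ (n : ℤ)))
  have he : IsIdempotentElem e := by
    refine isIdempotentElem_half_smul_one_add ?_
    rw [← map_mul, ← zpow_add, ← two_mul]
    exact_mod_cast congrArg ι ha |>.trans (map_one ι)
  have hu : Commute e u :=
    ((Commute.one_left _).add_left (((Commute.refl _).zpow_left _).map ι)).smul_left _
  have hu_zpow : ∀ k : ℤ, (↑(u ^ k) : MonoidAlgebra ℂ (DihedralGroup (2 * n))) = ι (r 1 ^ k) :=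
    fun k => by rw [← map_zpow]; rfl
  have hf_eq : ∀ k, f k = twistedZPow u e k := by
    intro k
    rw [hf, twistedZPow, hu_zpow, hu_zpow, ← mul_smul_comm]
    change _ - (_ - _) * e = _
    noncomm_ring
  have hf_mul : ∀ k j, f k * f j = f (k + j) := by
    simpa only [hf_eq] using twistedZPow_mul_twistedZPow he hu
  have hf_zero : f 0 = 1 := by rw [hf_eq, twistedZPow_eq_one_of_zpow_eq_one (zpow_zero u)]
  refine ⟨fun k => hf_mul k 1, ?_, by rw [hf_mul, neg_add_cancel, hf_zero],
    by rw [hf_mul, add_neg_cancel, hf_zero]⟩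
  rw [hf_eq, twistedZPow_one_pow he hu, twistedZPow_eq_one_of_zpow_eq_one]
  exact_mod_cast show u ^ (2 * n) = 1 by rw [← map_pow, ha, map_one]

theorem stmt0 (n : ℕ) (hn : 1 ≤ n)
    (f : ℤ → MonoidAlgebra ℂ (DihedralGroup (2 * n)))
    (hf : ∀ k : ℤ, f k =
      of ℂ (DihedralGroup (2 * n)) ((r 1 : DihedralGroup (2 * n)) ^ k)
        - (1 / 2 : ℂ) •
          ((of ℂ (DihedralGroup (2 * n)) ((r 1 : DihedralGroup (2 * n)) ^ k)
              - of ℂ (DihedralGroup (2 * n)) ((r 1 : DihedralGroup (2 * n)) ^ (-k)))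
            * (1 + of ℂ (DihedralGroup (2 * n)) ((r 1 : DihedralGroup (2 * n)) ^ (n : ℤ))))) :
    (∀ k : ℤ, f k * f 1 = f (k + 1)) ∧ f 1 ^ (2 * n) = 1 ∧
      f (-1) * f 1 = 1 ∧ f 1 * f (-1) = 1 :=
  stmt0_general n f hf
end

section
/- Let n ≥ 1 and let D be the dihedral group of order 4n with generators a (order 2n) and b (order 2, bab⁻¹ = a⁻¹). The elements A = a − (1/2)(a − a^{-1})(1 + a^n) and B = a^n b of the group algebra ℂ[D] satisfy A^{2n} = 1, B² = 1, and BA = A^{-1}B; consequently the assignment a ↦ A, b ↦ B extends to a unital algebra endomorphism Θ′ of ℂ[D]. Moreover Θ′ is an involution: Θ′(Θ′(a)) = a and Θ′(Θ′(b)) = b, so Θ′ is an algebra automorphism of ℂ[D]. -/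
/-!
Let `z = aⁿ`; it is a central involution of `D`, so `e = (1 + z) / 2` is a central idempotent
of `ℂ[D]`, and `A = a - (a - a⁻¹) e = a⁻¹ e + a (1 - e)` acts as `a⁻¹` on the corner `e ℂ[D]`
and as `a` on the corner `(1 - e) ℂ[D]`. Computing cornerwise, `A` is a unit with `A^(2n) = 1`
and `Aⁿ = aⁿ = z`, and `b` inverts `A` by conjugation because it commutes with `e`. Hence
`(A, zb)` is again a dihedral pair, which gives `Θ'`. Since `Aⁿ = z`, the same recipe applied
to `A` uses the same idempotent `e`, and swapping the corner components twice gives back `a`;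
also `Θ'(zb) = Aⁿ z b = z² b = b`.
-/

open MonoidAlgebra DihedralGroup

theorem pow_mul_pow_eq_one_of_pow_two_mul {M : Type*} [Monoid M] {x : M} {n : ℕ}
    (hx : x ^ (2 * n) = 1) : x ^ n * x ^ n = 1 := by
  rwa [← pow_add, ← two_mul]

section GroupRelations

variable {G : Type*} [Group G] {x y : G}

theorem inv_pow_eq_pow_of_pow_two_mul {n : ℕ} (hx : x ^ (2 * n) = 1) : x⁻¹ ^ n = x ^ n := by
  rw [inv_pow, inv_eq_of_mul_eq_one_right (pow_mul_pow_eq_one_of_pow_two_mul hx)]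

theorem mul_mul_eq_self_iff_semiconjBy_inv : x * y * x = y ↔ SemiconjBy y x x⁻¹ := by
  rw [SemiconjBy, eq_inv_mul_iff_mul_eq, ← mul_assoc]

theorem pow_mul_mul_eq_self (h : x * y * x = y) (m : ℕ) : x * (x ^ m * y) * x = x ^ m * y := by
  rw [← mul_assoc, (Commute.self_pow x m).eq]
  simp only [mul_assoc] at h ⊢
  rw [h]

theorem pow_mul_mul_pow_mul_eq_one (hy : y * y = 1) (h : x * y * x = y) {m : ℕ} :
    x ^ m * y * (x ^ m * y) = 1 := by
  have hconj : y * x ^ m = (x ^ m)⁻¹ * y := by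
    simpa [SemiconjBy] using (mul_mul_eq_self_iff_semiconjBy_inv.1 h).pow_right m
  rw [mul_assoc, ← mul_assoc y, hconj, mul_assoc, hy, mul_one, mul_inv_cancel]

end GroupRelations

section ZModPow

variable {n : ℕ} {G : Type*} [Group G]

def zmodPow (x : G) (hx : x ^ n = 1) (i : ZMod n) : G :=
  (ZMod.lift n ⟨zmultiplesHom (Additive G) (Additive.ofMul x),
    by simp [← ofMul_pow, hx]⟩ i).toMul

variable (x : G) (hx : x ^ n = 1)

@[simp]
theorem zmodPow_intCast (k : ℤ) : zmodPow x hx k = x ^ k := by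
  simp [zmodPow, ZMod.lift_coe]

theorem zmodPow_add (i j : ZMod n) : zmodPow x hx (i + j) = zmodPow x hx i * zmodPow x hx j := by
  simp [zmodPow]

theorem SemiconjBy.zmodPow {y : G} (h : SemiconjBy y x x⁻¹) (i : ZMod n) :
    SemiconjBy y (zmodPow x hx i) (zmodPow x hx (-i)) := by
  obtain ⟨k, rfl⟩ := ZMod.intCast_surjective i
  simpa [SemiconjBy, ← Int.cast_neg] using h.zpow_right k

end ZModPow

namespace DihedralGroup

variable {n : ℕ}

theorem r_one_mul_sr_zero_mul_r_one : (r 1 : DihedralGroup n) * sr 0 * r 1 = sr 0 := by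
  simp [r_mul_sr, sr_mul_r]

variable {G : Type*} [Group G]

def lift (x y : G) (hx : x ^ n = 1) (hy : y * y = 1) (hxy : x * y * x = y) :
    DihedralGroup n →* G where
  toFun
    | r i => zmodPow x hx i
    | sr i => y * zmodPow x hx i
  map_one' := by
    change zmodPow x hx 0 = 1
    simpa using zmodPow_intCast x hx 0
  map_mul' := by
    have hconj i := (mul_mul_eq_self_iff_semiconjBy_inv.1 hxy).zmodPow x hx i
    rintro (i | i) (j | j) <;> simp only [r_mul_r, r_mul_sr, sr_mul_r, sr_mul_sr]
    · rw [zmodPow_add]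
    · rw [sub_eq_neg_add, zmodPow_add, ← mul_assoc, (hconj _).eq, neg_neg, mul_assoc]
    · rw [zmodPow_add, mul_assoc]
    · rw [sub_eq_neg_add, zmodPow_add, ← mul_assoc, (hconj _).eq, mul_assoc _ y y, hy, mul_one]

variable (x y : G) (hx : x ^ n = 1) (hy : y * y = 1) (hxy : x * y * x = y)

@[simp]
theorem lift_r_one : lift x y hx hy hxy (r 1) = x := by
  change zmodPow x hx 1 = x
  simpa using zmodPow_intCast x hx 1

@[simp]
theorem lift_sr_zero : lift x y hx hy hxy (sr 0) = y := by
  change y * zmodPow x hx 0 = y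
  simpa using zmodPow_intCast x hx 0

theorem closure_r_one_sr_zero :
    Subgroup.closure {r 1, sr 0} = (⊤ : Subgroup (DihedralGroup n)) := by
  have hsr : (sr 0 : DihedralGroup n) ∈ Subgroup.closure {r 1, sr 0} :=
    Subgroup.subset_closure (Set.mem_insert_of_mem _ (Set.mem_singleton _))
  have hr (i : ZMod n) : r i ∈ Subgroup.closure {r 1, sr 0} := by
    obtain ⟨k, rfl⟩ := ZMod.intCast_surjective i
    rw [← r_one_zpow]
    exact Subgroup.zpow_mem _ (Subgroup.subset_closure (Set.mem_insert _ _)) k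
  refine eq_top_iff.2 fun g _ => ?_
  rcases g with i | i
  · exact hr i
  · simpa using Subgroup.mul_mem _ hsr (hr i)

theorem hom_ext {M : Type*} [Monoid M] {f g : DihedralGroup n →* M} (hr : f (r 1) = g (r 1))
    (hs : f (sr 0) = g (sr 0)) : f = g :=
  MonoidHom.eq_of_eqOn_dense closure_r_one_sr_zero (by simp [Set.EqOn, hr, hs])

theorem algHom_ext {k S : Type*} [CommSemiring k] [Semiring S] [Algebra k S]
    {f g : MonoidAlgebra k (DihedralGroup n) →ₐ[k] S}
    (hr : f (of k _ (r 1)) = g (of k _ (r 1))) (hs : f (of k _ (sr 0)) = g (of k _ (sr 0))) :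
    f = g :=
  (MonoidAlgebra.lift k S _).symm.injective (hom_ext hr hs)

end DihedralGroup

section IdemPiecewise

variable {S : Type*} [Ring S] {e : S}

def idemPiecewise (e x y : S) : S := x * e + y * (1 - e)

theorem idemPiecewise_self (e x : S) : idemPiecewise e x x = x := by
  rw [idemPiecewise, ← mul_add, add_sub_cancel, mul_one]

theorem SemiconjBy.idemPiecewise {s x y x' y' : S} (hs : Commute s e) (hx : SemiconjBy s x x')
    (hy : SemiconjBy s y y') : SemiconjBy s (idemPiecewise e x y) (idemPiecewise e x' y') :=
  (hx.mul_right hs).add_right (hy.mul_right ((SemiconjBy.one_right s).sub_right hs))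

theorem idemPiecewise_mul_idemPiecewise (he : IsIdempotentElem e) {x y x' y' : S}
    (hx' : Commute e x') (hy' : Commute e y') :
    idemPiecewise e x y * idemPiecewise e x' y' = idemPiecewise e (x * x') (y * y') := by
  have hx'' : Commute (1 - e) x' := (Commute.one_left x').sub_left hx'
  have hy'' : Commute (1 - e) y' := (Commute.one_left y').sub_left hy'
  calc idemPiecewise e x y * idemPiecewise e x' y'
      = x * (e * x') * e + x * (e * y') * (1 - e) + y * ((1 - e) * x') * e
          + y * ((1 - e) * y') * (1 - e) := by simp only [idemPiecewise]; noncomm_ring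
    _ = x * x' * (e * e) + x * y' * (e * (1 - e)) + y * x' * ((1 - e) * e)
          + y * y' * ((1 - e) * (1 - e)) := by
        rw [hx'.eq, hy'.eq, hx''.eq, hy''.eq]; noncomm_ring
    _ = idemPiecewise e (x * x') (y * y') := by
        rw [he.eq, he.mul_one_sub_self, he.one_sub_mul_self, he.one_sub.eq, idemPiecewise]
        noncomm_ring

theorem idemPiecewise_pow (he : IsIdempotentElem e) {x y : S} (hx : Commute e x)
    (hy : Commute e y) (k : ℕ) : idemPiecewise e x y ^ k = idemPiecewise e (x ^ k) (y ^ k) := by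
  induction k with
  | zero => simp only [pow_zero, idemPiecewise_self]
  | succ k ih =>
    rw [pow_succ, ih, idemPiecewise_mul_idemPiecewise he hx hy, ← pow_succ, ← pow_succ]

theorem idemPiecewise_idemPiecewise (he : IsIdempotentElem e) (x y x' y' : S) :
    idemPiecewise e (idemPiecewise e x y) (idemPiecewise e x' y') = idemPiecewise e x y' := by
  simp only [idemPiecewise, add_mul, mul_assoc, he.eq, he.one_sub_mul_self, he.mul_one_sub_self,
    he.one_sub.eq, mul_zero, add_zero, zero_add]

def Units.idemPiecewise (he : IsIdempotentElem e) (u v : Sˣ) (hu : Commute e u)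
    (hv : Commute e v) : Sˣ where
  val := _root_.idemPiecewise e u v
  inv := _root_.idemPiecewise e ↑u⁻¹ ↑v⁻¹
  val_inv := by
    rw [idemPiecewise_mul_idemPiecewise he hu.units_inv_right hv.units_inv_right, u.mul_inv,
      v.mul_inv, idemPiecewise_self]
  inv_val := by
    rw [idemPiecewise_mul_idemPiecewise he hu hv, u.inv_mul, v.inv_mul, idemPiecewise_self]

end IdemPiecewise

section PlusProj

variable (k : Type*) {S : Type*} [Field k] [Ring S] [Algebra k S]

def plusProj (z : S) : S := (1 / 2 : k) • (1 + z)

variable {k}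

theorem isIdempotentElem_plusProj [NeZero (2 : k)] {z : S} (hz : z * z = 1) :
    IsIdempotentElem (plusProj k z) := by
  have h2 : (1 + z) * (1 + z) = (2 : k) • (1 + z) := by
    rw [two_smul, add_mul, mul_add, mul_add, hz, one_mul, one_mul, mul_one]; abel
  rw [IsIdempotentElem, plusProj, smul_mul_smul_comm, h2, smul_smul]
  congr 1
  field_simp

theorem Commute.plusProj_right {x z : S} (h : Commute x z) : Commute x (plusProj k z) :=
  ((Commute.one_right x).add_right h).smul_right _

theorem sub_half_smul_mul_eq_idemPiecewise (u v z : S) :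
    u - (1 / 2 : k) • ((u - v) * (1 + z)) = idemPiecewise (plusProj k z) v u := by
  rw [← mul_smul_comm, idemPiecewise, ← plusProj]
  noncomm_ring

end PlusProj

section Twist

variable {k S : Type*} [Field k] [Ring S] [Algebra k S] {n : ℕ} {u : Sˣ}

theorem isIdempotentElem_plusProj_pow [NeZero (2 : k)] (hu : u ^ (2 * n) = 1) :
    IsIdempotentElem (plusProj k ((u : S) ^ n)) :=
  isIdempotentElem_plusProj (by rw [← Units.val_pow_eq_pow_val, ← Units.val_mul,
    pow_mul_pow_eq_one_of_pow_two_mul hu, Units.val_one])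

theorem commute_plusProj_pow (u : Sˣ) (n : ℕ) : Commute (plusProj k ((u : S) ^ n)) u :=
  (Commute.self_pow (u : S) n).plusProj_right.symm

variable [NeZero (2 : k)]

variable (k) in
def twist (hu : u ^ (2 * n) = 1) : Sˣ :=
  Units.idemPiecewise (isIdempotentElem_plusProj_pow (k := k) hu) u⁻¹ u
    (commute_plusProj_pow u n).units_inv_right (commute_plusProj_pow u n)

variable (hu : u ^ (2 * n) = 1)

theorem coe_twist_eq_idemPiecewise :
    (twist k hu : S) = idemPiecewise (plusProj k ((u : S) ^ n)) ↑u⁻¹ u :=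
  rfl

theorem coe_twist_inv_eq_idemPiecewise :
    (↑(twist k hu)⁻¹ : S) = idemPiecewise (plusProj k ((u : S) ^ n)) u ↑u⁻¹ :=
  rfl

theorem coe_twist : (twist k hu : S) = u - (1 / 2 : k) • ((u - ↑u⁻¹) * (1 + (u : S) ^ n)) :=
  (sub_half_smul_mul_eq_idemPiecewise _ _ _).symm

theorem twist_pow_of_inv_pow_eq {m : ℕ} (hm : u⁻¹ ^ m = u ^ m) : twist k hu ^ m = u ^ m := by
  have hm' : (↑u⁻¹ : S) ^ m = (u : S) ^ m := by
    rw [← Units.val_pow_eq_pow_val, hm, Units.val_pow_eq_pow_val]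
  ext
  rw [Units.val_pow_eq_pow_val, Units.val_pow_eq_pow_val, coe_twist_eq_idemPiecewise,
    idemPiecewise_pow (isIdempotentElem_plusProj_pow hu)
      (commute_plusProj_pow u n).units_inv_right (commute_plusProj_pow u n),
    hm', idemPiecewise_self]

theorem twist_pow_two_mul : twist k hu ^ (2 * n) = 1 := by
  rw [twist_pow_of_inv_pow_eq (k := k) hu (by rw [inv_pow, hu, inv_one]), hu]

theorem twist_pow : twist k hu ^ n = u ^ n :=
  twist_pow_of_inv_pow_eq hu (inv_pow_eq_pow_of_pow_two_mul hu)

theorem twist_twist : twist k (twist_pow_two_mul (k := k) hu) = u := by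
  have hpow : ((twist k hu : Sˣ) : S) ^ n = (u : S) ^ n := by
    rw [← Units.val_pow_eq_pow_val, twist_pow, Units.val_pow_eq_pow_val]
  ext
  rw [coe_twist_eq_idemPiecewise, hpow, coe_twist_inv_eq_idemPiecewise,
    coe_twist_eq_idemPiecewise, idemPiecewise_idemPiecewise (isIdempotentElem_plusProj_pow hu),
    idemPiecewise_self]

theorem twist_mul_mul_twist {s : Sˣ} (hus : u * s * u = s) :
    twist k hu * s * twist k hu = s := by
  rw [mul_mul_eq_self_iff_semiconjBy_inv] at hus ⊢
  have hsz : Commute (s : S) ((u : S) ^ n) := by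
    have h := hus.pow_right n
    rw [inv_pow_eq_pow_of_pow_two_mul hu] at h
    exact Units.val_pow_eq_pow_val u n ▸ h.units_val
  have hsu' : SemiconjBy (s : S) ↑u⁻¹ u := by simpa using hus.inv_right.units_val
  rw [← SemiconjBy.units_val_iff, coe_twist_eq_idemPiecewise, coe_twist_inv_eq_idemPiecewise]
  exact hsu'.idemPiecewise hsz.plusProj_right hus.units_val

theorem twist_mul_pow_mul_mul_twist {s : Sˣ} (hus : u * s * u = s) :
    twist k hu * (u ^ n * s) * twist k hu = u ^ n * s := by
  rw [← twist_pow (k := k) hu]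
  exact pow_mul_mul_eq_self (twist_mul_mul_twist hu hus) n

theorem map_twist {S' : Type*} [Ring S'] [Algebra k S'] (f : S →ₐ[k] S') {v : S'ˣ}
    (hv : v ^ (2 * n) = 1) (hf : Units.map f u = v) : f (twist k hu) = twist k hv := by
  subst hf
  simp [coe_twist]

end Twist

section DihedralAlgebra

variable (k : Type*) [Field k] (m n : ℕ)

noncomputable def rotUnit : (MonoidAlgebra k (DihedralGroup m))ˣ := (of k _).toHomUnits (r 1)

noncomputable def reflUnit : (MonoidAlgebra k (DihedralGroup m))ˣ := (of k _).toHomUnits (sr 0)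

@[simp]
theorem coe_rotUnit : (rotUnit k m : MonoidAlgebra k (DihedralGroup m)) = of k _ (r 1) := rfl

@[simp]
theorem coe_rotUnit_inv :
    (↑(rotUnit k m)⁻¹ : MonoidAlgebra k (DihedralGroup m)) = of k _ (r 1)⁻¹ :=
  rfl

@[simp]
theorem coe_reflUnit : (reflUnit k m : MonoidAlgebra k (DihedralGroup m)) = of k _ (sr 0) := rfl

theorem rotUnit_pow_self : rotUnit k m ^ m = 1 := by
  rw [rotUnit, ← map_pow, r_one_pow_n, map_one]

theorem reflUnit_mul_self : reflUnit k m * reflUnit k m = 1 := by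
  rw [reflUnit, ← map_mul, sr_mul_self, map_one]

theorem rotUnit_mul_reflUnit_mul_rotUnit :
    rotUnit k m * reflUnit k m * rotUnit k m = reflUnit k m := by
  rw [rotUnit, reflUnit, ← map_mul, ← map_mul, r_one_mul_sr_zero_mul_r_one]

variable [NeZero (2 : k)]

noncomputable def twistAlgHom :
    MonoidAlgebra k (DihedralGroup (2 * n)) →ₐ[k] MonoidAlgebra k (DihedralGroup (2 * n)) :=
  MonoidAlgebra.lift k _ _ <| (Units.coeHom _).comp <|
    DihedralGroup.lift (twist k (rotUnit_pow_self k (2 * n)))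
      (rotUnit k (2 * n) ^ n * reflUnit k (2 * n)) (twist_pow_two_mul _)
      (pow_mul_mul_pow_mul_eq_one (reflUnit_mul_self k _) (rotUnit_mul_reflUnit_mul_rotUnit k _))
      (twist_mul_pow_mul_mul_twist _ (rotUnit_mul_reflUnit_mul_rotUnit k _))

theorem twistAlgHom_of_r_one :
    twistAlgHom k n (of k _ (r 1)) = twist k (rotUnit_pow_self k (2 * n)) := by
  simp [twistAlgHom]

theorem twistAlgHom_of_sr_zero :
    twistAlgHom k n (of k _ (sr 0)) = of k _ (r 1) ^ n * of k _ (sr 0) := by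
  simp [twistAlgHom]

theorem units_map_twistAlgHom_rotUnit :
    Units.map (twistAlgHom k n : _ →* _) (rotUnit k (2 * n)) =
      twist k (rotUnit_pow_self k (2 * n)) :=
  Units.ext <| by rw [Units.coe_map, MonoidHom.coe_coe, coe_rotUnit, twistAlgHom_of_r_one]

theorem twistAlgHom_twistAlgHom_of_r_one :
    twistAlgHom k n (twistAlgHom k n (of k _ (r 1))) = of k _ (r 1) := by
  rw [twistAlgHom_of_r_one, map_twist _ (twistAlgHom k n) (twist_pow_two_mul _)
    (units_map_twistAlgHom_rotUnit k n), twist_twist, coe_rotUnit]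

theorem twistAlgHom_twistAlgHom_of_sr_zero :
    twistAlgHom k n (twistAlgHom k n (of k _ (sr 0))) = of k _ (sr 0) := by
  rw [twistAlgHom_of_sr_zero, map_mul, map_pow, twistAlgHom_of_r_one, twistAlgHom_of_sr_zero,
    ← Units.val_pow_eq_pow_val, twist_pow, ← mul_assoc, Units.val_pow_eq_pow_val, coe_rotUnit,
    ← pow_add, ← map_pow, ← two_mul, r_one_pow_n, map_one, one_mul]

theorem twistAlgHom_involutive : Function.Involutive (twistAlgHom k n) := by
  have h : (twistAlgHom k n).comp (twistAlgHom k n) = AlgHom.id k _ :=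
    DihedralGroup.algHom_ext (twistAlgHom_twistAlgHom_of_r_one k n)
      (twistAlgHom_twistAlgHom_of_sr_zero k n)
  exact AlgHom.congr_fun h

end DihedralAlgebra

theorem stmt1_general (n : ℕ)
    (A B : MonoidAlgebra ℂ (DihedralGroup (2 * n)))
    (hA : A = of ℂ (DihedralGroup (2 * n)) (r 1)
        - (1 / 2 : ℂ) •
          ((of ℂ (DihedralGroup (2 * n)) (r 1)
              - of ℂ (DihedralGroup (2 * n)) ((r 1 : DihedralGroup (2 * n))⁻¹))
            * (1 + of ℂ (DihedralGroup (2 * n)) ((r 1 : DihedralGroup (2 * n)) ^ n))))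
    (hB : B = of ℂ (DihedralGroup (2 * n)) ((r 1 : DihedralGroup (2 * n)) ^ n * sr 0)) :
    A ^ (2 * n) = 1 ∧ B ^ 2 = 1 ∧ A * B * A = B ∧
      ∃ Θ : MonoidAlgebra ℂ (DihedralGroup (2 * n)) →ₐ[ℂ] MonoidAlgebra ℂ (DihedralGroup (2 * n)),
        Θ (of ℂ (DihedralGroup (2 * n)) (r 1)) = A ∧
        Θ (of ℂ (DihedralGroup (2 * n)) (sr 0)) = B ∧
        Θ (Θ (of ℂ (DihedralGroup (2 * n)) (r 1))) = of ℂ (DihedralGroup (2 * n)) (r 1) ∧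
        Θ (Θ (of ℂ (DihedralGroup (2 * n)) (sr 0))) = of ℂ (DihedralGroup (2 * n)) (sr 0) ∧
        Function.Bijective Θ := by
  have hu := rotUnit_pow_self ℂ (2 * n)
  have hus := rotUnit_mul_reflUnit_mul_rotUnit ℂ (2 * n)
  have hA' : A = twist ℂ hu := by simp [hA, coe_twist]
  have hB' : B = ↑(rotUnit ℂ (2 * n) ^ n * reflUnit ℂ (2 * n)) := by simp [hB]
  refine ⟨?_, ?_, ?_, twistAlgHom ℂ n, ?_, ?_, twistAlgHom_twistAlgHom_of_r_one ℂ n,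
    twistAlgHom_twistAlgHom_of_sr_zero ℂ n, (twistAlgHom_involutive ℂ n).bijective⟩
  · rw [hA', ← Units.val_pow_eq_pow_val, twist_pow_two_mul, Units.val_one]
  · rw [hB', sq, ← Units.val_mul, pow_mul_mul_pow_mul_eq_one (reflUnit_mul_self ℂ _) hus,
      Units.val_one]
  · rw [hA', hB', ← Units.val_mul, ← Units.val_mul, twist_mul_pow_mul_mul_twist hu hus]
  · rw [hA', twistAlgHom_of_r_one]
  · rw [hB', twistAlgHom_of_sr_zero, Units.val_mul, Units.val_pow_eq_pow_val, coe_rotUnit,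
      coe_reflUnit]

theorem stmt1 (n : ℕ) (hn : 1 ≤ n)
    (A B : MonoidAlgebra ℂ (DihedralGroup (2 * n)))
    (hA : A = of ℂ (DihedralGroup (2 * n)) (r 1)
        - (1 / 2 : ℂ) •
          ((of ℂ (DihedralGroup (2 * n)) (r 1)
              - of ℂ (DihedralGroup (2 * n)) ((r 1 : DihedralGroup (2 * n))⁻¹))
            * (1 + of ℂ (DihedralGroup (2 * n)) ((r 1 : DihedralGroup (2 * n)) ^ n))))
    (hB : B = of ℂ (DihedralGroup (2 * n)) ((r 1 : DihedralGroup (2 * n)) ^ n * sr 0)) :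
    A ^ (2 * n) = 1 ∧ B ^ 2 = 1 ∧ A * B * A = B ∧
      ∃ Θ : MonoidAlgebra ℂ (DihedralGroup (2 * n)) →ₐ[ℂ] MonoidAlgebra ℂ (DihedralGroup (2 * n)),
        Θ (of ℂ (DihedralGroup (2 * n)) (r 1)) = A ∧
        Θ (of ℂ (DihedralGroup (2 * n)) (sr 0)) = B ∧
        Θ (Θ (of ℂ (DihedralGroup (2 * n)) (r 1))) = of ℂ (DihedralGroup (2 * n)) (r 1) ∧
        Θ (Θ (of ℂ (DihedralGroup (2 * n)) (sr 0))) = of ℂ (DihedralGroup (2 * n)) (sr 0) ∧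
        Function.Bijective Θ :=
  stmt1_general n A B hA hB
end

section
/- Let m ≥ 1, n = 2m, and let Q be the generalized quaternion group of order 4n with presentation ⟨a, b | a^{2n} = 1, b² = a^n, bab⁻¹ = a^{-1}⟩. In ℂ[Q], define f_k = a^k + (1/4)(a^k − a^{-k})(a^n − 1)(1 − b a^m) for each integer k. Then f_0 = 1 and f_k · f_1 = f_{k+1} for all k ∈ ℤ; in particular f_1^{2n} = 1 and f_{-1} = f_1^{-1}. -/
/-!
For `b` with `b ^ 4 = 1` and `b ^ 2` central, put `z = b ^ 2` and
`τ(x, x') = x + ¼ (x - x') (z - 1) (1 - b)`. Whenever `b y = y' b` and `b y' = y b`, one has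
`τ(x, x') τ(y, y') = τ(x y, x' y')`: moving `b` past `y - y'` gives
`(1 - b)(y - y') = (y - y')(1 + b)`, then `(1 + b)(1 - b) = 1 - z` and `(z - 1)³ = 4 (z - 1)` make
the quadratic term cancel the surplus of the linear ones. Hence `g ↦ τ(g, b g b⁻¹)` is a group
homomorphism `G → K[G]`. For `Q_n`, with the element `b a^m` in the role of `b`, it sends `a ^ k`
to `f_k`, so every claimed identity is the image of an identity between powers of `a`.
-/

open MonoidAlgebra QuaternionGroup

section Twist

variable (K : Type*) {R : Type*} [Field K] [Ring R] [Algebra K R]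

def quatTwist (b x x' : R) : R := x + (1 / 4 : K) • ((x - x') * (b ^ 2 - 1) * (1 - b))

variable {K}

theorem quatTwist_self (b x : R) : quatTwist K b x x = x := by
  simp [quatTwist]

theorem mul_mul_eq_mul_mul_of_mul_eq {M : Type*} [Semigroup M] {p q p' q' : M}
    (h : p * q = p' * q') (t : M) : p * (q * t) = p' * (q' * t) := by
  rw [← mul_assoc, h, mul_assoc]

theorem quatTwist_mul [CharZero K] {b y y' : R} (hb : b ^ 4 = 1) (hy : b * y = y' * b)
    (hy' : b * y' = y * b) (x x' : R) :
    quatTwist K b x x' * quatTwist K b y y' = quatTwist K b (x * y) (x' * y') := by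
  have hbb : b * b = b ^ 2 := (sq b).symm
  have hzb : b ^ 2 * b = b * b ^ 2 := (pow_succ b 2).symm.trans (pow_succ' b 2)
  have hzz : b ^ 2 * b ^ 2 = 1 := by rw [← pow_add, hb]
  have hzy : b ^ 2 * y = y * b ^ 2 := by
    rw [sq, mul_assoc, hy, ← mul_assoc, hy', mul_assoc]
  have hzy' : b ^ 2 * y' = y' * b ^ 2 := by
    rw [sq, mul_assoc, hy', ← mul_assoc, hy, mul_assoc]
  unfold quatTwist
  generalize b ^ 2 = z at *
  simp only [mul_sub, sub_mul, mul_add, add_mul, mul_one, smul_mul_assoc, mul_smul_comm,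
    smul_smul, smul_sub, smul_add, mul_assoc]
  simp only [mul_mul_eq_mul_mul_of_mul_eq hy, mul_mul_eq_mul_mul_of_mul_eq hy',
    mul_mul_eq_mul_mul_of_mul_eq hzy, mul_mul_eq_mul_mul_of_mul_eq hzy',
    mul_mul_eq_mul_mul_of_mul_eq hzb, mul_mul_eq_mul_mul_of_mul_eq (hbb.trans (mul_one z).symm),
    hy, hy', hzy, hzy', hzb, hbb, hzz, mul_one, one_mul]
  match_scalars <;> norm_num

end Twist

section TwistHom

variable (K : Type*) [Field K] [CharZero K] {G : Type*} [Group G]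

noncomputable def quatTwistHom (b : G) (hb2 : b ^ 2 ∈ Subgroup.center G) (hb4 : b ^ 4 = 1) :
    G →* MonoidAlgebra K G where
  toFun g := quatTwist K (of K G b) (of K G g) (of K G (MulAut.conj b g))
  map_one' := by simp only [map_one, quatTwist_self]
  map_mul' g h := by
    have hconj : b * h = MulAut.conj b h * b := by simp
    have hconj' : b * MulAut.conj b h = h * b := by
      rw [MulAut.conj_apply, ← mul_assoc, ← mul_assoc, ← sq,
        ← Subgroup.mem_center_iff.mp hb2 h]
      group
    simp only [map_mul]
    refine (quatTwist_mul ?_ ?_ ?_ _ _).symm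
    · rw [← map_pow, hb4, map_one]
    · rw [← map_mul, ← map_mul, hconj]
    · rw [← map_mul, ← map_mul, hconj']

theorem quatTwistHom_apply (b : G) (hb2 : b ^ 2 ∈ Subgroup.center G) (hb4 : b ^ 4 = 1) (g : G) :
    quatTwistHom K b hb2 hb4 g = quatTwist K (of K G b) (of K G g) (of K G (MulAut.conj b g)) :=
  rfl

end TwistHom

namespace QuaternionGroup

variable {n : ℕ}

theorem a_n_mem_center : (a n : QuaternionGroup n) ∈ Subgroup.center (QuaternionGroup n) := by
  rw [Subgroup.mem_center_iff]
  rintro (j | j)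
  · rw [a_mul_a, a_mul_a, add_comm]
  · rw [xa_mul_a, a_mul_xa, sub_eq_add_neg]
    congr 1
    rw [add_right_inj, eq_neg_iff_add_eq_zero, ← two_mul]
    exact_mod_cast ZMod.natCast_self (2 * n)

theorem conj_xa_a_one_zpow (i : ZMod (2 * n)) (k : ℤ) :
    MulAut.conj (xa i) (a 1 ^ k) = (a 1 : QuaternionGroup n) ^ (-k) := by
  have h : MulAut.conj (xa i) (a 1) = (a 1 : QuaternionGroup n)⁻¹ := by
    rw [MulAut.conj_apply, mul_inv_eq_iff_eq_mul, xa_mul_a]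
    show xa (i + 1) = a (-1) * xa i
    rw [a_mul_xa, sub_neg_eq_add]
  rw [map_zpow, h, inv_zpow, zpow_neg]

end QuaternionGroup

theorem stmt2_general (m : ℕ)
    (f : ℤ → MonoidAlgebra ℂ (QuaternionGroup (2 * m)))
    (hf : ∀ k : ℤ, f k =
      of ℂ (QuaternionGroup (2 * m)) ((a 1 : QuaternionGroup (2 * m)) ^ k)
        + (1 / 4 : ℂ) •
          ((of ℂ (QuaternionGroup (2 * m)) ((a 1 : QuaternionGroup (2 * m)) ^ k)
              - of ℂ (QuaternionGroup (2 * m)) ((a 1 : QuaternionGroup (2 * m)) ^ (-k)))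
            * (of ℂ (QuaternionGroup (2 * m)) ((a 1 : QuaternionGroup (2 * m)) ^ (2 * m)) - 1)
            * (1 - of ℂ (QuaternionGroup (2 * m))
                (xa 0 * (a 1 : QuaternionGroup (2 * m)) ^ m)))) :
    f 0 = 1 ∧ (∀ k : ℤ, f k * f 1 = f (k + 1)) ∧ f 1 ^ (2 * (2 * m)) = 1 ∧
      f (-1) * f 1 = 1 ∧ f 1 * f (-1) = 1 := by
  have hb : xa 0 * (a 1 : QuaternionGroup (2 * m)) ^ m = xa m := by
    rw [a_one_pow, xa_mul_a, zero_add]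
  have hb2 : (xa m : QuaternionGroup (2 * m)) ^ 2 = a 1 ^ (2 * m) := by
    rw [xa_sq, a_one_pow]
  let φ := quatTwistHom ℂ (xa m : QuaternionGroup (2 * m))
    (by rw [xa_sq]; exact a_n_mem_center) (xa_pow_four _)
  have hφ : ∀ k : ℤ, f k = φ (a 1 ^ k) := fun k => by
    rw [hf, hb, ← hb2, map_pow, quatTwistHom_apply, conj_xa_a_one_zpow, quatTwist]
  refine ⟨?_, fun k => ?_, ?_, ?_, ?_⟩ <;>
    simp only [hφ, ← map_mul, ← map_pow, ← zpow_add_one, zpow_one, a_one_pow_n, zpow_zero,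
      zpow_neg_one, mul_inv_cancel, inv_mul_cancel, map_one]

theorem stmt2 (m : ℕ) (hm : 1 ≤ m)
    (f : ℤ → MonoidAlgebra ℂ (QuaternionGroup (2 * m)))
    (hf : ∀ k : ℤ, f k =
      of ℂ (QuaternionGroup (2 * m)) ((a 1 : QuaternionGroup (2 * m)) ^ k)
        + (1 / 4 : ℂ) •
          ((of ℂ (QuaternionGroup (2 * m)) ((a 1 : QuaternionGroup (2 * m)) ^ k)
              - of ℂ (QuaternionGroup (2 * m)) ((a 1 : QuaternionGroup (2 * m)) ^ (-k)))
            * (of ℂ (QuaternionGroup (2 * m)) ((a 1 : QuaternionGroup (2 * m)) ^ (2 * m)) - 1)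
            * (1 - of ℂ (QuaternionGroup (2 * m))
                (xa 0 * (a 1 : QuaternionGroup (2 * m)) ^ m)))) :
    f 0 = 1 ∧ (∀ k : ℤ, f k * f 1 = f (k + 1)) ∧ f 1 ^ (2 * (2 * m)) = 1 ∧
      f (-1) * f 1 = 1 ∧ f 1 * f (-1) = 1 :=
  stmt2_general m f hf
end
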